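/- Let x₀ = √(-2α²·ln(y/(2w))) (well-defined since 0 < y < 2w). The point c̄ = x ± x₀ with w·exp(-(x-c̄)²/(2α²)) = y/2 is a critical point of the primal P(c) = (1/2)(w·e^{-(x-c)²/(2α²)} - y)² + (1/2)βc² if and only if βx + (β + y²/(4α²))x₀ = 0 or βx - (β + y²/(4α²))x₀ = 0. -/

import Mathlib

noncomputable def primalP (w x y α β c : ℝ) : ℝ :=
  (1/2) * (w * Real.exp (-(x - c)^2 / (2 * α^2)) - y)^2 + (1/2) * β * c^2

/-!
At a point c where the Gaussian w·e^{-(x-c)²/(2α²)} has dropped to y/2, the residual is -y/2, so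
P'(c) = (residual)·(Gaussian)·(x-c)/α² + βc collapses to βc - y²(x-c)/(4α²). The choice of x₀
makes x ± x₀ such points, and substituting c = x ± x₀ gives βx ± (β + y²/(4α²))x₀.
-/

open Real

lemma hasDerivAt_primalP (w x y α β c : ℝ) :
    HasDerivAt (primalP w x y α β)
      ((w * exp (-(x - c)^2 / (2 * α^2)) - y) * (w * exp (-(x - c)^2 / (2 * α^2))) *
        ((x - c) / α^2) + β * c) c := by
  have hexponent : HasDerivAt (fun c => -(x - c)^2 / (2 * α^2)) ((x - c) / α^2) c := by
    refine ((((hasDerivAt_id c).const_sub x).pow 2).neg.div_const (2 * α^2)).congr_deriv ?_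
    simp only [id, Nat.cast_ofNat]
    ring
  exact ((((hexponent.exp.const_mul w).sub_const y).pow 2).const_mul (1/2) |>.add
    ((hasDerivAt_pow 2 c).const_mul (1/2 * β))).congr_deriv (by ring)

lemma deriv_primalP_of_half_height {w x y α β c : ℝ}
    (hc : w * exp (-(x - c)^2 / (2 * α^2)) = y / 2) :
    deriv (primalP w x y α β) c = β * c - y^2 * (x - c) / (4 * α^2) := by
  rw [(hasDerivAt_primalP w x y α β c).deriv, hc]
  ring

lemma half_height_of_sq_eq {w x y α c : ℝ} (hy : 0 < y) (hyw : y < 2 * w) (hα : α ≠ 0)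
    (hc : (x - c)^2 = -2 * α^2 * log (y / (2 * w))) :
    w * exp (-(x - c)^2 / (2 * α^2)) = y / 2 := by
  have hw : 0 < w := by linarith
  rw [hc, show -(-2 * α^2 * log (y / (2 * w))) / (2 * α^2) = log (y / (2 * w)) by field_simp,
    exp_log (by positivity)]
  field_simp

theorem pseudo_point_primal_criticality_general
    (w x y α β : ℝ) (hy : 0 < y) (hyw : y < 2 * w)
    (hα : α ≠ 0) :
    (deriv (fun c => primalP w x y α β c)
        (x + Real.sqrt (-2 * α^2 * Real.log (y / (2 * w)))) = 0 ↔
      β * x + (β + y^2 / (4 * α^2)) *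
        Real.sqrt (-2 * α^2 * Real.log (y / (2 * w))) = 0) ∧
    (deriv (fun c => primalP w x y α β c)
        (x - Real.sqrt (-2 * α^2 * Real.log (y / (2 * w)))) = 0 ↔
      β * x - (β + y^2 / (4 * α^2)) *
        Real.sqrt (-2 * α^2 * Real.log (y / (2 * w))) = 0) := by
  have hlog : log (y / (2 * w)) ≤ 0 :=
    log_nonpos (div_pos hy (hy.trans hyw)).le ((div_le_one (hy.trans hyw)).2 hyw.le)
  set x₀ := sqrt (-2 * α^2 * log (y / (2 * w)))
  have hx₀ : x₀ ^ 2 = -2 * α^2 * log (y / (2 * w)) :=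
    sq_sqrt (mul_nonneg_of_nonpos_of_nonpos (by nlinarith [sq_nonneg α]) hlog)
  have hplus := half_height_of_sq_eq (c := x + x₀) hy hyw hα (by rw [← hx₀]; ring)
  have hminus := half_height_of_sq_eq (c := x - x₀) hy hyw hα (by rw [← hx₀]; ring)
  rw [deriv_primalP_of_half_height hplus, deriv_primalP_of_half_height hminus]
  constructor <;> ring_nf

/-- With x₀ = √(-2α²·ln(y/(2w))), the point c̄ = x ± x₀ (at which
w·e^{-(x-c̄)²/(2α²)} = y/2) is a critical point of the primal if and only if
βx + (β + y²/(4α²))x₀ = 0, resp. βx - (β + y²/(4α²))x₀ = 0. -/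
theorem pseudo_point_primal_criticality
    (w x y α β : ℝ) (hw : 0 < w) (hy : 0 < y) (hyw : y < 2 * w)
    (hα : α ≠ 0) (hβ : 0 < β) :
    (deriv (fun c => primalP w x y α β c)
        (x + Real.sqrt (-2 * α^2 * Real.log (y / (2 * w)))) = 0 ↔
      β * x + (β + y^2 / (4 * α^2)) *
        Real.sqrt (-2 * α^2 * Real.log (y / (2 * w))) = 0) ∧
    (deriv (fun c => primalP w x y α β c)
        (x - Real.sqrt (-2 * α^2 * Real.log (y / (2 * w)))) = 0 ↔
      β * x - (β + y^2 / (4 * α^2)) *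
        Real.sqrt (-2 * α^2 * Real.log (y / (2 * w))) = 0) :=
  pseudo_point_primal_criticality_general w x y α β hy hyw hα
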